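/- arXiv:0902.2533 — 4 statements merged into one kernel-verified Lean document; each statement's English description precedes it below -/
import Mathlib

section
/- The formal power series E(t) = exp(-∑_{r≥0} t^{p^r}/p^r) over ℚ equals the infinite product ∏_{r≥1, gcd(r,p)=1} (1-t^r)^{μ(r)/r}, where μ is the Möbius function. -/
open scoped Classical

/-- Formal composition `f(g(t))` of power series over `ℚ` (meaningful when `g` has zero
constant term): the `n`-th coefficient is `∑_{k ≤ n} f_k · [t^n](g^k)`. -/
noncomputable def PSComp (g f : PowerSeries ℚ) : PowerSeries ℚ :=
  PowerSeries.mk fun n =>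
    ∑ k ∈ Finset.range (n + 1), PowerSeries.coeff k f * PowerSeries.coeff n (g ^ k)

/-- The Artin–Hasse exponential `E(t) = exp(-∑_{r ≥ 0} t^{p^r}/p^r)`, obtained by
substituting `-∑_{r≥0} t^{p^r}/p^r` (whose coefficient at `n = p^r` is `-1/n`) into the
exponential power series. -/
noncomputable def artinHasseExp (p : ℕ) : PowerSeries ℚ :=
  PSComp (PowerSeries.mk fun n => if ∃ k : ℕ, n = p ^ k then -(1 / (n : ℚ)) else 0)
    (PowerSeries.exp ℚ)

/-- `log(1 - t^r) = -∑_{k ≥ 1} t^{rk}/k`; the coefficient at `n = rk` is `-1/k = -r/n`. -/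
noncomputable def logOneSubPow (r : ℕ) : PowerSeries ℚ :=
  PowerSeries.mk fun n => if n ≠ 0 ∧ r ∣ n then -((r : ℚ) / (n : ℚ)) else 0

/-- The binomial-series power `(1 - t^r)^{μ(r)/r} = exp((μ(r)/r) · log(1 - t^r))`. -/
noncomputable def moebiusFactor (r : ℕ) : PowerSeries ℚ :=
  PSComp ((((ArithmeticFunction.moebius r : ℤ) : ℚ) / (r : ℚ)) • logOneSubPow r)
    (PowerSeries.exp ℚ)

/-- The infinite product `∏_{r ≥ 1, gcd(r,p) = 1} (1 - t^r)^{μ(r)/r}`: since the factor for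
`r` is `1 + O(t^r)`, its `n`-th coefficient equals the `n`-th coefficient of the finite
product over `1 ≤ r ≤ n` with `gcd(r,p) = 1`. -/
noncomputable def moebiusProd (p : ℕ) : PowerSeries ℚ :=
  PowerSeries.mk fun n =>
    PowerSeries.coeff n
      (∏ r ∈ (Finset.range (n + 1)).filter (fun r => 1 ≤ r ∧ Nat.gcd r p = 1),
        moebiusFactor r)

/-!
Formally, `log ∏_{(r,p)=1} (1 - t^r)^{μ(r)/r} = -∑_{m ≥ 1} (t^m / m) ∑_{r ∣ m, (r,p)=1} μ(r)`,
and the divisors of `m` prime to `p` are the divisors of the `p`-free part of `m`, so the inner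
Möbius sum is `1` if `m` is a power of `p` and `0` otherwise: the logarithms of both sides agree.
To compare exponentials coefficientwise we work in `ℚ[[t]]/(t^{n+1})`, where series without
constant term become nilpotent and `exp` turns sums of nilpotents into products.
-/

open Finset PowerSeries
open scoped Nat ArithmeticFunction.Moebius

namespace PowerSeries

noncomputable abbrev modXPow (R : Type*) [CommRing R] (n : ℕ) :
    R⟦X⟧ →+* R⟦X⟧ ⧸ Ideal.span {(X : R⟦X⟧) ^ (n + 1)} :=
  Ideal.Quotient.mk _

variable {R : Type*} [CommRing R]

theorem modXPow_eq_modXPow_iff {n : ℕ} {f g : R⟦X⟧} :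
    modXPow R n f = modXPow R n g ↔ ∀ m ≤ n, coeff m f = coeff m g := by
  simp only [modXPow, Ideal.Quotient.eq, Ideal.mem_span_singleton, X_pow_dvd_iff, map_sub,
    sub_eq_zero, Nat.lt_succ_iff]

theorem coeff_pow_eq_zero_of_lt {f : R⟦X⟧} (hf : constantCoeff f = 0) {k m : ℕ} (h : m < k) :
    coeff m (f ^ k) = 0 :=
  X_pow_dvd_iff.1 (pow_dvd_pow_of_dvd (X_dvd_iff.2 hf) k) m h

theorem modXPow_pow_eq_zero {n : ℕ} {f : R⟦X⟧} (hf : constantCoeff f = 0) :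
    modXPow R n f ^ (n + 1) = 0 := by
  rw [← map_pow, Ideal.Quotient.eq_zero_iff_mem, Ideal.mem_span_singleton]
  exact pow_dvd_pow_of_dvd (X_dvd_iff.2 hf) _

end PowerSeries

theorem IsNilpotent.exp_sum {A ι : Type*} [CommRing A] [Module ℚ A] {s : Finset ι}
    {f : ι → A} (hf : ∀ i ∈ s, IsNilpotent (f i)) : exp (∑ i ∈ s, f i) = ∏ i ∈ s, exp (f i) := by
  induction s using Finset.cons_induction with
  | empty => simp
  | cons i s hi ih =>
    rw [forall_mem_cons] at hf
    rw [sum_cons, prod_cons, exp_add_of_commute (Commute.all _ _) hf.1 (isNilpotent_sum hf.2),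
      ih hf.2]

theorem coeff_PSComp_exp (g : ℚ⟦X⟧) (m : ℕ) :
    coeff m (PSComp g (exp ℚ)) = ∑ k ∈ range (m + 1), (k ! : ℚ)⁻¹ * coeff m (g ^ k) := by
  simp [PSComp, coeff_exp]

theorem modXPow_PSComp_exp {g : ℚ⟦X⟧} (hg : constantCoeff g = 0) (n : ℕ) :
    modXPow ℚ n (PSComp g (exp ℚ)) = IsNilpotent.exp (modXPow ℚ n g) := by
  rw [IsNilpotent.exp_eq_sum (modXPow_pow_eq_zero hg)]
  simp_rw [← map_pow, ← map_rat_smul, ← map_sum]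
  refine modXPow_eq_modXPow_iff.2 fun m hm => ?_
  simp only [coeff_PSComp_exp, map_sum, coeff_smul, smul_eq_mul]
  refine sum_subset (range_subset_range.2 (by omega)) fun k _ hkm => ?_
  rw [coeff_pow_eq_zero_of_lt hg (by simpa using hkm), mul_zero]

theorem Nat.divisors_filter_coprime_eq_divisors_ordCompl {p n : ℕ} (hp : p.Prime) (hn : n ≠ 0) :
    n.divisors.filter (fun r => r.gcd p = 1) = (ordCompl[p] n).divisors := by
  ext r
  simp only [mem_filter, mem_divisors, ne_eq, hn, (Nat.ordCompl_pos p hn).ne', not_false_eq_true,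
    and_true]
  constructor
  · rintro ⟨hrn, hrp⟩
    rw [← Nat.ordProj_mul_ordCompl_eq_self n p] at hrn
    exact (Nat.Coprime.pow_right _ hrp).dvd_of_dvd_mul_left hrn
  · intro hr
    exact ⟨hr.trans (Nat.ordCompl_dvd n p),
      Nat.Coprime.coprime_dvd_left hr (Nat.coprime_ordCompl hp hn).symm⟩

theorem Nat.ordCompl_eq_one_iff {p n : ℕ} (hp : p.Prime) :
    ordCompl[p] n = 1 ↔ ∃ k : ℕ, n = p ^ k := by
  constructor
  · intro h
    exact ⟨n.factorization p, by simpa [h] using (Nat.ordProj_mul_ordCompl_eq_self n p).symm⟩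
  · rintro ⟨k, rfl⟩
    rw [hp.factorization_pow, Finsupp.single_eq_same, Nat.div_self (pow_pos hp.pos k)]

theorem sum_moebius_divisors_coprime {p n : ℕ} (hp : p.Prime) (hn : n ≠ 0) :
    ∑ r ∈ n.divisors.filter (fun r => r.gcd p = 1), μ r =
      if ∃ k : ℕ, n = p ^ k then 1 else 0 := by
  rw [Nat.divisors_filter_coprime_eq_divisors_ordCompl hp hn,
    ← ArithmeticFunction.coe_mul_zeta_apply, ArithmeticFunction.moebius_mul_coe_zeta,
    ArithmeticFunction.one_apply]
  exact if_congr (Nat.ordCompl_eq_one_iff hp) rfl rfl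

noncomputable def moebiusLog (r : ℕ) : ℚ⟦X⟧ :=
  (((μ r : ℤ) : ℚ) / r) • logOneSubPow r

noncomputable def artinHasseLog (p : ℕ) : ℚ⟦X⟧ :=
  PowerSeries.mk fun n => if ∃ k : ℕ, n = p ^ k then -(1 / (n : ℚ)) else 0

theorem constantCoeff_moebiusLog (r : ℕ) : constantCoeff (moebiusLog r) = 0 := by
  simp [moebiusLog, logOneSubPow, ← coeff_zero_eq_constantCoeff_apply]

theorem constantCoeff_artinHasseLog (p : ℕ) : constantCoeff (artinHasseLog p) = 0 := by
  simp [artinHasseLog, ← coeff_zero_eq_constantCoeff_apply]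

theorem coeff_moebiusLog {r m : ℕ} (hr : r ≠ 0) (hm : m ≠ 0) :
    coeff m (moebiusLog r) = if r ∣ m then -((μ r : ℚ) / m) else 0 := by
  simp only [moebiusLog, logOneSubPow, coeff_smul, coeff_mk, ne_eq, hm, not_false_eq_true,
    true_and, smul_eq_mul]
  split_ifs
  · field_simp
  · rw [mul_zero]

theorem coeff_sum_moebiusLog {p m N : ℕ} (hm : m ≠ 0) (hmN : m ≤ N) :
    coeff m (∑ r ∈ (range (N + 1)).filter (fun r => 1 ≤ r ∧ r.gcd p = 1), moebiusLog r) =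
      -(1 / m) * ∑ r ∈ m.divisors.filter (fun r => r.gcd p = 1), (μ r : ℚ) := by
  have hdiv : ((range (N + 1)).filter (fun r => 1 ≤ r ∧ r.gcd p = 1)).filter (· ∣ m) =
      m.divisors.filter (fun r => r.gcd p = 1) := by
    ext r
    simp only [mem_filter, mem_range, Nat.mem_divisors, ne_eq, hm, not_false_eq_true, and_true]
    constructor
    · rintro ⟨⟨_, _, hrp⟩, hrm⟩
      exact ⟨hrm, hrp⟩
    · rintro ⟨hrm, hrp⟩
      have := Nat.le_of_dvd (Nat.pos_of_ne_zero hm) hrm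
      exact ⟨⟨by omega, Nat.pos_of_dvd_of_pos hrm (Nat.pos_of_ne_zero hm), hrp⟩, hrm⟩
  have hterm (r) (hr : r ∈ (range (N + 1)).filter (fun r => 1 ≤ r ∧ r.gcd p = 1)) :=
    coeff_moebiusLog (r := r) (by simp only [mem_filter] at hr; omega) hm
  rw [map_sum, sum_congr rfl hterm, ← sum_filter, hdiv, mul_sum]
  exact sum_congr rfl fun r _ => by ring

theorem coeff_sum_moebiusLog_eq_coeff_artinHasseLog {p m N : ℕ} (hp : p.Prime)
    (hmN : m ≤ N) :
    coeff m (∑ r ∈ (range (N + 1)).filter (fun r => 1 ≤ r ∧ r.gcd p = 1), moebiusLog r) =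
      coeff m (artinHasseLog p) := by
  rcases eq_or_ne m 0 with rfl | hm
  · simp [constantCoeff_moebiusLog, constantCoeff_artinHasseLog]
  · rw [coeff_sum_moebiusLog hm hmN, ← Int.cast_sum, sum_moebius_divisors_coprime hp hm,
      artinHasseLog, coeff_mk]
    split_ifs <;> simp

/-- The Artin–Hasse exponential `E(t) = exp(-∑_{r≥0} t^{p^r}/p^r)` over `ℚ` equals the
infinite product `∏_{r ≥ 1, gcd(r,p)=1} (1 - t^r)^{μ(r)/r}`, where `μ` is the Möbius
function. -/
theorem artinHasseExp_eq_moebiusProd (p : ℕ) (hp : p.Prime) :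
    artinHasseExp p = moebiusProd p := by
  ext n
  set S := (range (n + 1)).filter (fun r => 1 ≤ r ∧ Nat.gcd r p = 1)
  have hlog : modXPow ℚ n (artinHasseLog p) = modXPow ℚ n (∑ r ∈ S, moebiusLog r) :=
    modXPow_eq_modXPow_iff.2 fun m hm =>
      (coeff_sum_moebiusLog_eq_coeff_artinHasseLog hp hm).symm
  have hexp : modXPow ℚ n (artinHasseExp p) = modXPow ℚ n (∏ r ∈ S, moebiusFactor r) := by
    calc modXPow ℚ n (artinHasseExp p)
        = IsNilpotent.exp (modXPow ℚ n (∑ r ∈ S, moebiusLog r)) := by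
          rw [← hlog]; exact modXPow_PSComp_exp (constantCoeff_artinHasseLog p) n
      _ = ∏ r ∈ S, IsNilpotent.exp (modXPow ℚ n (moebiusLog r)) := by
          rw [map_sum, IsNilpotent.exp_sum fun r _ =>
            ⟨n + 1, modXPow_pow_eq_zero (constantCoeff_moebiusLog r)⟩]
      _ = modXPow ℚ n (∏ r ∈ S, moebiusFactor r) := by
          rw [map_prod]
          exact prod_congr rfl fun r _ =>
            (modXPow_PSComp_exp (constantCoeff_moebiusLog r) n).symm
  rw [moebiusProd, coeff_mk]
  exact modXPow_eq_modXPow_iff.1 hexp n le_rfl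
end

section
/- For a discrete valuation field K of characteristic p > 0 and n ∈ ℕ, the set fil_n W_r(K) = { (f_{r-1},…,f_0) ∈ W_r(K) : v(f_i) ≥ -n/p^i for all 0 ≤ i ≤ r-1 } is a subgroup of the additive group of Witt vectors W_r(K) of length r. -/
/-!
Choose `t` with `v t = 1`. Multiplication by the Teichmüller lift `[a]` scales the `m`-th Witt
coordinate by `a ^ p ^ m`, and in characteristic `p` the Frobenius `F` raises every coordinate to
the `p`-th power, so `x ↦ [t ^ n] · F^(r-1) x` is additive and sends the coordinate `x_m` to
`t ^ (n p^m) x_m ^ p^(r-1)`, of valuation `p^m (n + p^(r-1-m) v(x_m))`. Hence the length-`r`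
truncation of `x` lies in `fil_n` exactly when the first `r` coordinates of `[t ^ n] · F^(r-1) x`
are integral, and `fil_n` is the image, under truncation, of the preimage of the subring of
integral truncated Witt vectors under an additive map.
-/

open WittVector

/-- The Brylinski filtration `fil_n W_r(K)` on Witt vectors of length `r` over a discrete
valuation field `K`: writing a Witt vector of length `r` as `(f_{r-1}, …, f_0)` (so that the
paper's coordinate `f_i` is the Witt coordinate `coeff (r-1-i)`), it consists of those vectors
with `p^i · v(f_i) ≥ -n` for all `0 ≤ i ≤ r-1`. -/
def filWitt (p : ℕ) [hp : Fact p.Prime] {K : Type*} [Field K]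
    (v : AddValuation K (WithTop ℤ)) (r n : ℕ) : Set (TruncatedWittVector p r K) :=
  {x | ∀ i : Fin r, ((-(n : ℤ) : ℤ) : WithTop ℤ) ≤ (p ^ (r - 1 - (i : ℕ))) • v (x.coeff i)}

theorem WithTop.nonneg_nsmul_coe_add_iff {a : ℕ} (ha : a ≠ 0) (c : ℤ) (y : WithTop ℤ) :
    0 ≤ a • ((c : WithTop ℤ) + y) ↔ ((-c : ℤ) : WithTop ℤ) ≤ y := by
  induction y with
  | top =>
    obtain ⟨a, rfl⟩ := Nat.exists_eq_succ_of_ne_zero ha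
    exact iff_of_true (by rw [WithTop.add_top]; exact le_top) le_top
  | coe y =>
    norm_cast
    rw [nsmul_eq_mul, mul_nonneg_iff_of_pos_left (by positivity)]
    omega

theorem AddValuation.map_pow_pow_mul_pow_of_eq_one {R : Type*} [Ring R]
    (v : AddValuation R (WithTop ℤ)) {t : R} (ht : v t = ((1 : ℤ) : WithTop ℤ))
    (n a b : ℕ) (w : R) :
    v ((t ^ n) ^ a * w ^ (a * b)) = a • (((n : ℤ) : WithTop ℤ) + b • v w) := by
  rw [v.map_mul, v.map_pow, v.map_pow, v.map_pow, ht, mul_nsmul', nsmul_add, ← WithTop.coe_nsmul]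
  simp

namespace WittVector

variable (p : ℕ) [Fact p.Prime]

theorem teichmuller_mul_eq_mk_of_invertible {R : Type*} [CommRing R] [Invertible (p : R)]
    (a : R) (x : WittVector p R) :
    teichmuller p a * x = mk p fun m => a ^ p ^ m * x.coeff m := by
  apply (ghostMap.bijective_of_invertible p R).1
  ext1 m
  rw [map_mul, Pi.mul_apply, ghostMap_apply, ghostComponent_teichmuller, ghostMap_apply,
    ghostMap_apply, ghostComponent_apply, ghostComponent_apply, aeval_wittPolynomial,
    aeval_wittPolynomial, Finset.mul_sum]
  refine Finset.sum_congr rfl fun i hi => ?_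
  rw [coeff_mk, mul_pow, ← pow_mul, ← pow_add,
    Nat.add_sub_cancel' (Nat.lt_succ_iff.mp (Finset.mem_range.mp hi))]
  ring

theorem teichmuller_mul_eq_mk_of_mvPolynomial {σ : Type*} (a : MvPolynomial σ ℤ)
    (x : WittVector p (MvPolynomial σ ℤ)) :
    teichmuller p a * x = mk p fun m => a ^ p ^ m * x.coeff m := by
  refine map_injective (MvPolynomial.map (Int.castRingHom ℚ))
    (MvPolynomial.map_injective _ Int.cast_injective) ?_
  rw [map_mul, map_teichmuller, teichmuller_mul_eq_mk_of_invertible]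
  ext m
  simp only [map_coeff, coeff_mk, map_mul, map_pow]

theorem teichmuller_mul_eq_mk {R : Type*} [CommRing R] (a : R) (x : WittVector p R) :
    teichmuller p a * x = mk p fun m => a ^ p ^ m * x.coeff m := by
  obtain ⟨a, rfl⟩ := MvPolynomial.counit_surjective R a
  obtain ⟨x, rfl⟩ := map_surjective _ (MvPolynomial.counit_surjective R) x
  rw [← map_teichmuller, ← map_mul, teichmuller_mul_eq_mk_of_mvPolynomial]
  ext m
  simp only [map_coeff, coeff_mk, map_mul, map_pow]

variable {R : Type*} [CommRing R] [ExpChar R p]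

noncomputable def teichmullerMulFrobenius (a : R) (k : ℕ) : WittVector p R →+ WittVector p R :=
  (AddMonoidHom.mulLeft (teichmuller p a)).comp (map (iterateFrobenius R p k)).toAddMonoidHom

theorem coeff_teichmullerMulFrobenius (a : R) (k : ℕ) (x : WittVector p R) (m : ℕ) :
    (teichmullerMulFrobenius p a k x).coeff m = a ^ p ^ m * x.coeff m ^ p ^ k := by
  rw [teichmullerMulFrobenius, AddMonoidHom.comp_apply, AddMonoidHom.coe_mulLeft,
    RingHom.toAddMonoidHom_eq_coe, AddMonoidHom.coe_coe, teichmuller_mul_eq_mk, coeff_mk,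
    map_coeff, iterateFrobenius_def]

end WittVector

section CoeffSubring

variable (p : ℕ) [Fact p.Prime] {R : Type*} [CommRing R]

noncomputable def TruncatedWittVector.coeffSubring (O : Subring R) (r : ℕ) :
    Subring (TruncatedWittVector p r R) :=
  (WittVector.map O.subtype).range.map (WittVector.truncate r)

theorem TruncatedWittVector.mem_coeffSubring {O : Subring R} {r : ℕ}
    {y : TruncatedWittVector p r R} :
    y ∈ TruncatedWittVector.coeffSubring p O r ↔ ∀ i, y.coeff i ∈ O := by
  constructor
  · rintro ⟨_, ⟨z, rfl⟩, rfl⟩ i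
    rw [WittVector.coeff_truncate, map_coeff]
    exact (z.coeff i).2
  · intro hy
    refine ⟨_, ⟨WittVector.mk p fun j => if hj : j < r then ⟨y.coeff ⟨j, hj⟩, hy _⟩ else 0, rfl⟩,
      ?_⟩
    ext i
    simp [WittVector.coeff_truncate, map_coeff, i.is_lt]

end CoeffSubring

theorem truncate_mem_filWitt_iff (p : ℕ) [hp : Fact p.Prime] {K : Type*} [Field K] [CharP K p]
    (v : AddValuation K (WithTop ℤ)) {t : K} (ht : v t = ((1 : ℤ) : WithTop ℤ)) (r n : ℕ)
    (x : WittVector p K) :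
    truncate r x ∈ filWitt p v r n ↔ truncate r (teichmullerMulFrobenius p (t ^ n) (r - 1) x) ∈
      TruncatedWittVector.coeffSubring p v.toValuation.integer r := by
  rw [TruncatedWittVector.mem_coeffSubring]
  refine forall_congr' fun i => ?_
  obtain ⟨k, hk⟩ : ∃ k, r - 1 = i + k := ⟨r - 1 - i, by omega⟩
  change _ ≤ _ ↔ 0 ≤ v _
  rw [coeff_truncate, coeff_truncate, coeff_teichmullerMulFrobenius, hk, Nat.add_sub_cancel_left,
    pow_add, v.map_pow_pow_mul_pow_of_eq_one ht,
    WithTop.nonneg_nsmul_coe_add_iff (pow_ne_zero _ hp.1.ne_zero)]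

/-- For a discrete valuation field `K` of characteristic `p > 0` and `n ∈ ℕ`, the set
`fil_n W_r(K) = {(f_{r-1},…,f_0) : v(f_i) ≥ -n/p^i}` is a subgroup of the additive group of
Witt vectors of length `r` over `K`. -/
theorem filWitt_isAddSubgroup (p : ℕ) [hp : Fact p.Prime] (K : Type*) [Field K] [CharP K p]
    (v : AddValuation K (WithTop ℤ)) (hdisc : Function.Surjective v) (r n : ℕ) :
    ∃ H : AddSubgroup (TruncatedWittVector p r K), (H : Set (TruncatedWittVector p r K)) =
      filWitt p v r n := by
  obtain ⟨t, ht⟩ := hdisc ((1 : ℤ) : WithTop ℤ)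
  let Θ := (truncate r).toAddMonoidHom.comp (teichmullerMulFrobenius p (t ^ n) (r - 1))
  let G := (TruncatedWittVector.coeffSubring p v.toValuation.integer r).toAddSubgroup.comap Θ
  have hG : (G : Set (WittVector p K)) = truncate r ⁻¹' filWitt p v r n := by
    ext x
    exact (truncate_mem_filWitt_iff p v ht r n x).symm
  refine ⟨G.map (truncate r).toAddMonoidHom, ?_⟩
  rw [AddSubgroup.coe_map, hG]
  exact Set.image_preimage_eq _ (truncate_surjective p r K)
end

section
/- For a field K of characteristic p > 0, the map δ : W_r(K) → Ω_{K/k} sending (f_{r-1},…,f_0) to ∑_{i=0}^{r-1} f_i^{p^i - 1} df_i is a homomorphism of additive groups. -/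
/-- The map `δ : W_r(K) → Ω_{K/k}` sending `(f_{r-1},…,f_0)` to
`∑_{i=0}^{r-1} f_i^{p^i - 1} d f_i`; in Witt coordinates (with `f_i = coeff (r-1-i)`) this is
`∑_{j} (coeff j)^(p^(r-1-j) - 1) • d(coeff j)`. -/
noncomputable def wittDelta (p : ℕ) [Fact p.Prime] (k K : Type*) [Field k] [Field K]
    [Algebra k K] {r : ℕ} (x : TruncatedWittVector p r K) : KaehlerDifferential k K :=
  ∑ j : Fin r,
    (x.coeff j) ^ (p ^ (r - 1 - (j : ℕ)) - 1) • KaehlerDifferential.D k K (x.coeff j)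

/-!
For a Witt vector `w` over any ring put `δₙ(w) = ∑_{i ≤ n} wᵢ^(p^(n-i) - 1) dwᵢ`. Differentiating
the ghost component `wₙ⁽ⁿ⁾ = ∑_{i ≤ n} pⁱ wᵢ^(p^(n-i))` term by term gives `pⁿ δₙ(w) = d(wₙ⁽ⁿ⁾)`,
and ghost components are additive, so `δₙ` is additive wherever `pⁿ` is injective on
differentials. This is the case for the universal pair of Witt vectors over `ℤ[X_{b,i}]`, whose
Kähler differentials form a free `ℤ[X_{b,i}]`-module. Any pair of Witt vectors over any ring, in
particular over a field of characteristic `p`, is the image of the universal pair, and `δₙ` is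
natural in the ring, which gives additivity in general.
-/

open Finset MvPolynomial

theorem Derivation.map_natCast_mul_pow {R A M : Type*} [CommSemiring R] [CommSemiring A]
    [Algebra R A] [AddCommMonoid M] [Module A M] [Module R M] [IsScalarTower R A M]
    (D : Derivation R A M) (c m : ℕ) (f : A) :
    D (c * f ^ m) = (c * m) • f ^ (m - 1) • D f := by
  rw [leibniz, map_natCast, smul_zero, add_zero, leibniz_pow, Nat.cast_smul_eq_nsmul, smul_smul]

instance KaehlerDifferential.isAddTorsionFree_mvPolynomial {σ R : Type*} [CommRing R]
    [IsDomain R] [CharZero R] : IsAddTorsionFree Ω[MvPolynomial σ R⁄R] :=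
  .of_isTorsionFree (MvPolynomial σ R) _

namespace WittVector

variable (p : ℕ) [Fact p.Prime]

section Delta

variable {R A M : Type*} [CommRing R] [CommRing A] [Algebra R A] [AddCommGroup M] [Module A M]
  [Module R M] [IsScalarTower R A M]

noncomputable def delta (D : Derivation R A M) (n : ℕ) (w : WittVector p A) : M :=
  ∑ i ∈ range (n + 1), w.coeff i ^ (p ^ (n - i) - 1) • D (w.coeff i)

theorem pow_smul_delta (D : Derivation R A M) (n : ℕ) (w : WittVector p A) :
    p ^ n • delta p D n w = D (ghostComponent n w) := by
  rw [ghostComponent_apply, aeval_wittPolynomial, map_sum, delta, smul_sum]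
  refine sum_congr rfl fun i hi => ?_
  rw [← Nat.cast_pow, D.map_natCast_mul_pow, ← pow_add,
    Nat.add_sub_cancel' (Nat.lt_succ_iff.mp (mem_range.mp hi))]

theorem delta_add [IsAddTorsionFree M] (D : Derivation R A M) (n : ℕ) (x y : WittVector p A) :
    delta p D n (x + y) = delta p D n x + delta p D n y := by
  apply nsmul_right_injective (pow_ne_zero n (Fact.out : p.Prime).ne_zero)
  simp only [smul_add, pow_smul_delta, map_add]

end Delta

theorem map_delta {R S A B : Type*} [CommRing R] [CommRing S] [CommRing A] [CommRing B]
    [Algebra R S] [Algebra R A] [Algebra S B] [Algebra A B] [Algebra R B] [IsScalarTower R A B]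
    [IsScalarTower R S B] [SMulCommClass S A B] (n : ℕ) (w : WittVector p A) :
    KaehlerDifferential.map R S A B (delta p (KaehlerDifferential.D R A) n w) =
      delta p (KaehlerDifferential.D S B) n (map (algebraMap A B) w) := by
  simp only [delta, map_sum, map_smul, KaehlerDifferential.map_D, map_coeff,
    algebra_compatible_smul B (_ ^ _ : A), map_pow]

theorem delta_kaehlerD_add (S B : Type*) [CommRing S] [CommRing B] [Algebra S B] (n : ℕ)
    (x y : WittVector p B) :
    delta p (KaehlerDifferential.D S B) n (x + y) =
      delta p (KaehlerDifferential.D S B) n x + delta p (KaehlerDifferential.D S B) n y := by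
  let A := MvPolynomial (Fin 2 × ℕ) ℤ
  let : Algebra A B := (aeval (Function.uncurry ![x.coeff, y.coeff])).toAlgebra
  let u (b : Fin 2) : WittVector p A := mk p fun i => X (b, i)
  have hu0 : map (algebraMap A B) (u 0) = x := by
    ext i; exact aeval_X _ _
  have hu1 : map (algebraMap A B) (u 1) = y := by
    ext i; exact aeval_X _ _
  simp only [← hu0, ← hu1, ← map_add, ← map_delta p (R := ℤ) (S := S), delta_add]

end WittVector

open WittVector

theorem wittDelta_truncate (p : ℕ) [Fact p.Prime] (k K : Type*) [Field k] [Field K]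
    [Algebra k K] (n : ℕ) (w : WittVector p K) :
    wittDelta p k K (truncate (n + 1) w) = delta p (KaehlerDifferential.D k K) n w := by
  rw [wittDelta, delta, ← Fin.sum_univ_eq_sum_range]
  simp only [coeff_truncate, Nat.add_sub_cancel]

theorem wittDelta_add_general (p : ℕ) [Fact p.Prime] (k K : Type*) [Field k] [Field K]
    [Algebra k K] (r : ℕ)
    (x y : TruncatedWittVector p r K) :
    wittDelta p k K (x + y) = wittDelta p k K x + wittDelta p k K y := by
  rcases r with _ | n
  · simp [wittDelta]
  obtain ⟨x, rfl⟩ := truncate_surjective p (n + 1) K x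
  obtain ⟨y, rfl⟩ := truncate_surjective p (n + 1) K y
  rw [← map_add, wittDelta_truncate, wittDelta_truncate, wittDelta_truncate, delta_kaehlerD_add]

/-- For a field `K` of characteristic `p > 0` over a perfect field `k`, the map
`δ : W_r(K) → Ω_{K/k}`, `(f_{r-1},…,f_0) ↦ ∑_{i=0}^{r-1} f_i^{p^i-1} df_i`, is a
homomorphism of additive groups. -/
theorem wittDelta_add (p : ℕ) [Fact p.Prime] (k K : Type*) [Field k] [Field K]
    [Algebra k K] [CharP k p] [PerfectRing k p] [CharP K p] (r : ℕ)
    (x y : TruncatedWittVector p r K) :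
    wittDelta p k K (x + y) = wittDelta p k K x + wittDelta p k K y :=
  wittDelta_add_general p k K r x y
end

section
/- Let C be a smooth proper curve over an algebraically closed field k, S a finite set of closed points, D = ∑_{q∈S} n_q·q an effective divisor with all n_q ≥ 1. Then the group of divisors of degree 0 supported away from S that are of the form div(f) with f ∈ O_{C,q}^× for all q ∈ S, modulo divisors div(f) with v_q(1-f) ≥ n_q for all q ∈ S, is isomorphic to ((∏_{q∈S} k(q)^×)/k^×) × ∏_{q∈S} (1+m_q)/(1+m_q^{n_q}). -/
/-!
Each `f ∈ G` has at every `q ∈ S` a residue `c_q(f) ∈ kˣ` (the residue fields are `k`) and a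
principal part `f / c_q(f) ∈ U_q^(1) = 1 + m_q`. The map
`f ↦ ((c_q(f))_q mod kˣ, (f / c_q(f) mod U_q^(n_q))_q)` is a homomorphism whose kernel consists
of the `f` congruent to a single constant `c` modulo every `U_q^(n_q)`, i.e. it is the subgroup
generated by `kˣ` and the `f ≡ 1 mod D`. It is surjective by weak approximation: the distinct
normalized valuations `v_q` give pairwise inequivalent absolute values `2 ^ (-v_q)`.
-/

open Function

namespace WithTop

theorem one_le_iff_pos {a : WithTop ℤ} : ((1 : ℤ) : WithTop ℤ) ≤ a ↔ 0 < a := by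
  induction a with
  | top => simp
  | coe a => norm_cast

section LeIffLe

variable {α : Type*} {f g : α → WithTop ℤ} (h : ∀ x y, f x ≤ f y ↔ g x ≤ g y)
include h

theorem lt_iff_lt_of_le_iff_le (x y : α) : f x < f y ↔ g x < g y := by
  simp only [lt_iff_not_ge, h]

theorem not_lt_and_lt_of_le_iff_le {x y z : α} {p : ℤ} (hx : f x = p)
    (hy : f y = (p + 1 : ℤ)) : ¬(g x < g z ∧ g z < g y) := by
  rintro ⟨hxz, hzy⟩
  rw [← lt_iff_lt_of_le_iff_le h, hx] at hxz
  rw [← lt_iff_lt_of_le_iff_le h, hy] at hzy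
  lift f z to ℤ using hzy.ne_top with c
  norm_cast at hxz hzy
  omega

theorem apply_eq_add_one_of_le_iff_le (hg : Surjective g) {x y : α} {m : ℤ} (hfx : f x = m)
    (hgx : g x = m) (hfy : f y = (m + 1 : ℤ)) : g y = (m + 1 : ℤ) := by
  have hxy : (m : WithTop ℤ) < g y := hgx ▸ (lt_iff_lt_of_le_iff_le h x y).mp
    (by rw [hfx, hfy]; exact_mod_cast Int.lt_succ m)
  by_contra hne
  have hlt : ((m + 1 : ℤ) : WithTop ℤ) < g y := by
    rcases eq_or_ne (g y) ⊤ with htop | hfin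
    · rw [htop]; exact coe_lt_top _
    · lift g y to ℤ using hfin with c
      norm_cast at hxy hne ⊢; omega
  obtain ⟨z, hz⟩ := hg (m + 1 : ℤ)
  exact not_lt_and_lt_of_le_iff_le h (z := z) hfx hfy
    ⟨by rw [hz, hgx]; exact_mod_cast Int.lt_succ m, hz ▸ hlt⟩

theorem apply_eq_of_le_iff_le_of_add_one (hg : Surjective g) {x y : α} {m : ℤ}
    (hfy : f y = (m + 1 : ℤ)) (hgy : g y = (m + 1 : ℤ)) (hfx : f x = m) : g x = m := by
  have hxy : g x < ((m + 1 : ℤ) : WithTop ℤ) := hgy ▸ (lt_iff_lt_of_le_iff_le h x y).mp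
    (by rw [hfx, hfy]; exact_mod_cast Int.lt_succ m)
  lift g x to ℤ using hxy.ne_top with c hc
  by_contra hne
  norm_cast at hxy hne
  obtain ⟨z, hz⟩ := hg m
  exact not_lt_and_lt_of_le_iff_le h (z := z) hfx hfy
    ⟨by rw [hz, ← hc]; exact_mod_cast (by omega : c < m),
      by rw [hz, hgy]; exact_mod_cast Int.lt_succ m⟩

theorem eq_of_le_iff_le (hf : Surjective f) (hg : Surjective g) {a : α} (hfa : f a = 0)
    (hga : g a = 0) : f = g := by
  have hfin (m : ℤ) : ∀ x, f x = m → g x = m := by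
    induction m using Int.induction_on with
    | zero =>
      intro x hx
      have : f x = f a := by rw [hx, hfa]; rfl
      rw [coe_zero, ← hga]
      exact le_antisymm ((h x a).mp this.le) ((h a x).mp this.ge)
    | succ i ih =>
      intro x hx
      obtain ⟨y, hy⟩ := hf i
      exact_mod_cast apply_eq_add_one_of_le_iff_le h hg hy (ih y hy) (by exact_mod_cast hx)
    | pred i ih =>
      intro x hx
      obtain ⟨y, hy⟩ := hf (-i : ℤ)
      exact apply_eq_of_le_iff_le_of_add_one h hg (by rw [hy]; congr 1; ring)
        (by rw [ih y hy]; congr 1; ring) hx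
  funext x
  rcases eq_or_ne (f x) ⊤ with hx | hx
  · obtain ⟨y, hy⟩ := hg ⊤
    rw [hx, eq_comm, ← top_le_iff, ← hy]
    exact (h y x).mp (hx ▸ le_top)
  lift f x to ℤ using hx with m hm
  exact (hfin m x hm.symm).symm

end LeIffLe

noncomputable def twoPowNeg : WithTop ℤ → ℝ
  | ⊤ => 0
  | (a : ℤ) => 2 ^ (-a)

@[simp] theorem twoPowNeg_top : twoPowNeg ⊤ = 0 := rfl

@[simp] theorem twoPowNeg_coe (a : ℤ) : twoPowNeg a = 2 ^ (-a) := rfl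

theorem twoPowNeg_add (a b : WithTop ℤ) : twoPowNeg (a + b) = twoPowNeg a * twoPowNeg b := by
  induction a <;> induction b <;>
    simp only [top_add, add_top, twoPowNeg_top, zero_mul, mul_zero, ← coe_add, twoPowNeg_coe,
      neg_add, zpow_add₀ (two_ne_zero' ℝ)]

theorem twoPowNeg_le_twoPowNeg {a b : WithTop ℤ} : twoPowNeg a ≤ twoPowNeg b ↔ b ≤ a := by
  induction a <;> induction b <;>
    simp only [twoPowNeg_top, twoPowNeg_coe, le_refl, le_top, top_le_iff, coe_ne_top,
      coe_le_coe, zpow_le_zpow_iff_right₀ (one_lt_two : (1 : ℝ) < 2), neg_le_neg_iff, iff_false,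
      not_le, zpow_pos (two_pos : (0 : ℝ) < 2), zpow_nonneg (zero_le_two : (0 : ℝ) ≤ 2)]

theorem twoPowNeg_nonneg (a : WithTop ℤ) : 0 ≤ twoPowNeg a :=
  twoPowNeg_top ▸ twoPowNeg_le_twoPowNeg.mpr le_top

theorem twoPowNeg_eq_zero {a : WithTop ℤ} : twoPowNeg a = 0 ↔ a = ⊤ := by
  induction a <;> simp [zpow_ne_zero]

end WithTop

namespace AddValuation

open WithTop

variable {K : Type*} [Field K]

noncomputable def toAbsoluteValue (v : AddValuation K (WithTop ℤ)) : AbsoluteValue K ℝ where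
  toFun x := twoPowNeg (v x)
  map_mul' x y := by simp only [v.map_mul, twoPowNeg_add]
  nonneg' x := twoPowNeg_nonneg _
  eq_zero' x := by rw [twoPowNeg_eq_zero, v.top_iff]
  add_le' x y := by
    rcases le_total (v x) (v y) with hxy | hyx
    · linarith [twoPowNeg_le_twoPowNeg.mpr (min_eq_left hxy ▸ v.map_add x y),
        twoPowNeg_nonneg (v y)]
    · linarith [twoPowNeg_le_twoPowNeg.mpr (min_eq_right hyx ▸ v.map_add x y),
        twoPowNeg_nonneg (v x)]

theorem toAbsoluteValue_apply (v : AddValuation K (WithTop ℤ)) (x : K) :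
    v.toAbsoluteValue x = twoPowNeg (v x) := rfl

theorem isNontrivial_toAbsoluteValue {v : AddValuation K (WithTop ℤ)} (hv : Surjective v) :
    v.toAbsoluteValue.IsNontrivial := by
  obtain ⟨x, hx⟩ := hv (1 : ℤ)
  refine ⟨x, v.ne_top_iff.mp (by simp [hx]), ?_⟩
  rw [toAbsoluteValue_apply, hx, twoPowNeg_coe]
  norm_num

theorem eq_of_isEquiv_toAbsoluteValue {v w : AddValuation K (WithTop ℤ)} (hv : Surjective v)
    (hw : Surjective w) (h : v.toAbsoluteValue.IsEquiv w.toAbsoluteValue) : v = w := by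
  have := WithTop.eq_of_le_iff_le (fun x y => by
    simpa [toAbsoluteValue_apply, twoPowNeg_le_twoPowNeg] using h y x) hv hw v.map_one w.map_one
  exact AddValuation.ext (congrFun this)

theorem exists_forall_le_val_sub {ι : Type*} [Finite ι] {v : ι → AddValuation K (WithTop ℤ)}
    (hsurj : ∀ i, Surjective (v i)) (hinj : Injective v) (t : ι → K) (N : ℤ) :
    ∃ f : K, ∀ i, (N : WithTop ℤ) ≤ v i (f - t i) := by
  have := Fintype.ofFinite ι
  have hdense := AbsoluteValue.denseRange_algebraMap_pi
    (fun i => isNontrivial_toAbsoluteValue (hsurj i))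
    (fun i j hij h => hij (hinj (eq_of_isEquiv_toAbsoluteValue (hsurj i) (hsurj j) h)))
  have hr : 0 < twoPowNeg N := zpow_pos two_pos _
  obtain ⟨f, hf⟩ := Metric.denseRange_iff.mp hdense (fun i => WithAbs.toAbs _ (t i)) _ hr
  refine ⟨f, fun i => twoPowNeg_le_twoPowNeg.mp ?_⟩
  have hi := (dist_pi_lt_iff hr).mp hf i
  rw [dist_comm, dist_eq_norm] at hi
  exact hi.le

theorem val_eq_zero_of_pos_val_one_sub (v : AddValuation K (WithTop ℤ)) {x : K}
    (h : 0 < v (1 - x)) : v x = 0 := by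
  rw [← sub_sub_cancel 1 x, v.map_sub_eq_of_lt_left (by rwa [v.map_one]), v.map_one]

/-- `v f = 0` is automatic for `0 < i`; it makes `higherUnitGroup v 0` the unit group `O_v^×`. -/
def higherUnitGroup (v : AddValuation K (WithTop ℤ)) (i : ℕ) : Subgroup Kˣ where
  carrier := {f | v f = 0 ∧ ((i : ℤ) : WithTop ℤ) ≤ v (1 - f)}
  one_mem' := by simp
  mul_mem' := by
    rintro f g ⟨hf, hf'⟩ ⟨hg, hg'⟩
    refine ⟨by simp [hf, hg], ?_⟩
    have : (1 : K) - ↑(f * g) = (1 - f) + f * (1 - g) := by push_cast; ring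
    rw [this]
    exact v.map_le_add hf' (by rwa [v.map_mul, hf, zero_add])
  inv_mem' := by
    rintro f ⟨hf, hf'⟩
    refine ⟨by simp [hf], ?_⟩
    have : (1 : K) - ↑f⁻¹ = -(1 - f) * (f : K)⁻¹ := by
      rw [Units.val_inv_eq_inv_val]; field_simp; ring
    rwa [this, v.map_mul, v.map_neg, v.map_inv, hf, neg_zero, add_zero]

variable {v : AddValuation K (WithTop ℤ)}

theorem mem_higherUnitGroup_zero {f : Kˣ} : f ∈ v.higherUnitGroup 0 ↔ v f = 0 := by
  refine ⟨And.left, fun hf => ⟨hf, ?_⟩⟩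
  simpa [hf] using v.map_sub 1 (f : K)

theorem mem_higherUnitGroup_of_pos {i : ℕ} (hi : 0 < i) {f : Kˣ} :
    f ∈ v.higherUnitGroup i ↔ ((i : ℤ) : WithTop ℤ) ≤ v (1 - f) := by
  refine ⟨And.right, fun h => ⟨v.val_eq_zero_of_pos_val_one_sub (lt_of_lt_of_le ?_ h), h⟩⟩
  exact_mod_cast hi

theorem higherUnitGroup_antitone : Antitone v.higherUnitGroup := fun _ _ hij _ hf =>
  ⟨hf.1, le_trans (by exact_mod_cast hij) hf.2⟩

theorem mul_inv_mem_higherUnitGroup_iff {i : ℕ} (hi : 0 < i) {f g : Kˣ} (hg : v g = 0) :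
    f * g⁻¹ ∈ v.higherUnitGroup i ↔ ((i : ℤ) : WithTop ℤ) ≤ v (f - g) := by
  have : (1 : K) - ↑(f * g⁻¹) = -(f - g) * (g : K)⁻¹ := by
    rw [Units.val_mul, Units.val_inv_eq_inv_val]; field_simp; ring
  rw [mem_higherUnitGroup_of_pos hi, this, v.map_mul, v.map_neg, v.map_inv, hg, neg_zero,
    add_zero]

section Residue

variable {k : Type*} [Field k] [Algebra k K]

local notation "ι" => Units.map (algebraMap k K : k →* K)

theorem units_map_algebraMap_mem_higherUnitGroup_one_iff
    (hconst : ∀ c : k, c ≠ 0 → v (algebraMap k K c) = 0) {c : kˣ} :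
    ι c ∈ v.higherUnitGroup 1 ↔ c = 1 := by
  refine ⟨fun h => ?_, fun h => by simp [h, one_mem]⟩
  by_contra hc
  have h1 := (mem_higherUnitGroup_of_pos one_pos).mp h
  have : (1 : K) - algebraMap k K c = algebraMap k K (1 - c) := by simp
  rw [Units.coe_map, MonoidHom.coe_coe, this,
    hconst _ (sub_ne_zero.mpr (Ne.symm (Units.val_eq_one.not.mpr hc)))] at h1
  exact absurd h1 (by decide)

theorem exists_mul_inv_mem_higherUnitGroup_one
    (hconst : ∀ c : k, c ≠ 0 → v (algebraMap k K c) = 0)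
    (hres : ∀ x : K, 0 ≤ v x → ∃ c : k, 0 < v (x - algebraMap k K c))
    (f : v.higherUnitGroup 0) : ∃ c : kˣ, (f : Kˣ) * (ι c)⁻¹ ∈ v.higherUnitGroup 1 := by
  have hf : v (f : Kˣ) = 0 := mem_higherUnitGroup_zero.mp f.2
  obtain ⟨c, hc⟩ := hres _ hf.ge
  have hc0 : c ≠ 0 := by rintro rfl; simp [hf] at hc
  refine ⟨Units.mk0 c hc0, (mul_inv_mem_higherUnitGroup_iff one_pos (hconst _ hc0)).mpr ?_⟩
  exact WithTop.one_le_iff_pos.mpr hc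

theorem eq_of_mul_inv_mem_higherUnitGroup_one
    (hconst : ∀ c : k, c ≠ 0 → v (algebraMap k K c) = 0) {f : Kˣ} {c c' : kˣ}
    (hc : f * (ι c)⁻¹ ∈ v.higherUnitGroup 1)
    (hc' : f * (ι c')⁻¹ ∈ v.higherUnitGroup 1) : c = c' := by
  have := mul_mem (inv_mem hc) hc'
  rw [mul_inv_rev, inv_inv, mul_assoc, inv_mul_cancel_left, ← _root_.map_inv,
    ← _root_.map_mul] at this
  exact mul_inv_eq_one.mp ((units_map_algebraMap_mem_higherUnitGroup_one_iff hconst).mp this)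

variable (v) (hconst : ∀ c : k, c ≠ 0 → v (algebraMap k K c) = 0)
  (hres : ∀ x : K, 0 ≤ v x → ∃ c : k, 0 < v (x - algebraMap k K c))

noncomputable def residue : v.higherUnitGroup 0 →* kˣ where
  toFun f := (exists_mul_inv_mem_higherUnitGroup_one hconst hres f).choose
  map_one' := eq_of_mul_inv_mem_higherUnitGroup_one hconst
    (exists_mul_inv_mem_higherUnitGroup_one hconst hres 1).choose_spec (by simp [one_mem])
  map_mul' f g := eq_of_mul_inv_mem_higherUnitGroup_one hconst
    (exists_mul_inv_mem_higherUnitGroup_one hconst hres (f * g)).choose_spec (by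
      convert mul_mem (exists_mul_inv_mem_higherUnitGroup_one hconst hres f).choose_spec
        (exists_mul_inv_mem_higherUnitGroup_one hconst hres g).choose_spec using 1
      rw [Subgroup.coe_mul, _root_.map_mul, mul_inv, mul_mul_mul_comm])

variable {v hconst hres} in
theorem residue_eq_iff {f : v.higherUnitGroup 0} {c : kˣ} :
    v.residue hconst hres f = c ↔ (f : Kˣ) * (ι c)⁻¹ ∈ v.higherUnitGroup 1 :=
  ⟨fun h => h ▸ (exists_mul_inv_mem_higherUnitGroup_one hconst hres f).choose_spec,
    eq_of_mul_inv_mem_higherUnitGroup_one hconst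
      (exists_mul_inv_mem_higherUnitGroup_one hconst hres f).choose_spec⟩

noncomputable def principalPart : v.higherUnitGroup 0 →* v.higherUnitGroup 1 where
  toFun f := ⟨f * (ι (v.residue hconst hres f))⁻¹, residue_eq_iff.mp rfl⟩
  map_one' := by ext; simp
  map_mul' f g := by
    ext; simp only [_root_.map_mul, Subgroup.coe_mul, mul_inv, mul_mul_mul_comm]

theorem residue_eq_and_inv_mul_principalPart_mem_iff {n : ℕ} (hn : 0 < n)
    (f : v.higherUnitGroup 0) (c : kˣ) (u : v.higherUnitGroup 1) :
    v.residue hconst hres f = c ∧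
        u⁻¹ * v.principalPart hconst hres f ∈
          (v.higherUnitGroup n).subgroupOf (v.higherUnitGroup 1) ↔
      (f : Kˣ) * (ι c * u)⁻¹ ∈ v.higherUnitGroup n := by
  have hpp : ((u⁻¹ * v.principalPart hconst hres f : v.higherUnitGroup 1) : Kˣ) =
      f * (ι (v.residue hconst hres f) * u)⁻¹ := by
    simp only [principalPart, MonoidHom.coe_mk, OneHom.coe_mk, Subgroup.coe_mul,
      Subgroup.coe_inv, mul_inv]
    rw [mul_comm, mul_assoc]
  rw [Subgroup.mem_subgroupOf, hpp]
  refine ⟨fun ⟨hc, h⟩ => hc ▸ h, fun h => ?_⟩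
  have hc : v.residue hconst hres f = c := by
    refine residue_eq_iff.mpr ?_
    convert mul_mem (v.higherUnitGroup_antitone hn h) u.2 using 1
    rw [mul_inv, mul_assoc, inv_mul_cancel_right]
  exact ⟨hc, hc ▸ h⟩

end Residue

end AddValuation

theorem Subgroup.mem_range_sup_iff {G H : Type*} [Group G] [CommGroup H] (φ : G →* H)
    (N : Subgroup H) {x : H} : x ∈ φ.range ⊔ N ↔ ∃ c, x * (φ c)⁻¹ ∈ N := by
  rw [Subgroup.mem_sup]
  constructor
  · rintro ⟨_, ⟨c, rfl⟩, y, hy, rfl⟩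
    exact ⟨c, by rwa [mul_comm, inv_mul_cancel_left]⟩
  · rintro ⟨c, hc⟩
    exact ⟨φ c, ⟨c, rfl⟩, _, hc, mul_inv_cancel_comm_assoc _ _⟩

section AffinePart

open AddValuation

variable {K k S : Type*} [Field K] [Field k] [Algebra k K] (v : S → AddValuation K (WithTop ℤ))
  (hconst : ∀ (q : S) (c : k), c ≠ 0 → v q (algebraMap k K c) = 0)
  (hres : ∀ (q : S) (x : K), 0 ≤ v q x → ∃ c : k, 0 < v q (x - algebraMap k K c))
  (n : S → ℕ)

local notation "ι" => Units.map (algebraMap k K : k →* K)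

variable (k) in
abbrev LocalQuotient : Type _ :=
  ((S → kˣ) ⧸ (MonoidHom.mk' (fun c : kˣ => fun _ : S => c) (fun _ _ => rfl)).range) ×
    ∀ q, (v q).higherUnitGroup 1 ⧸
      ((v q).higherUnitGroup (n q)).subgroupOf ((v q).higherUnitGroup 1)

noncomputable def residuePrincipalPartHom :
    ↥(⨅ q, (v q).higherUnitGroup 0) →* LocalQuotient k v n :=
  let incl q := Subgroup.inclusion (iInf_le (fun q => (v q).higherUnitGroup 0) q)
  ((QuotientGroup.mk' _).comp
      (MonoidHom.pi fun q => ((v q).residue (hconst q) (hres q)).comp (incl q))).prod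
    (MonoidHom.pi fun q =>
      (QuotientGroup.mk' _).comp (((v q).principalPart (hconst q) (hres q)).comp (incl q)))

theorem residuePrincipalPartHom_eq_mk_iff (f : ↥(⨅ q, (v q).higherUnitGroup 0)) (a : S → kˣ)
    (u : ∀ q, (v q).higherUnitGroup 1) :
    (QuotientGroup.mk a, fun q => QuotientGroup.mk (u q)) =
        residuePrincipalPartHom v hconst hres n f ↔
      ∃ c : kˣ, ∀ q, let f_q := Subgroup.inclusion (iInf_le _ q) f
        (v q).residue (hconst q) (hres q) f_q = a q * c ∧
          (u q)⁻¹ * (v q).principalPart (hconst q) (hres q) f_q ∈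
            ((v q).higherUnitGroup (n q)).subgroupOf ((v q).higherUnitGroup 1) := by
  simp only [residuePrincipalPartHom, MonoidHom.prod_apply, MonoidHom.comp_apply, Prod.mk.injEq,
    QuotientGroup.mk'_apply, QuotientGroup.eq, funext_iff, MonoidHom.mem_range, Pi.mul_apply,
    MonoidHom.pi_apply, MonoidHom.mk'_apply, eq_inv_mul_iff_mul_eq, eq_comm (b := a _ * _),
    forall_and, exists_and_right]

theorem ker_residuePrincipalPartHom (hn : ∀ q, 0 < n q) :
    (residuePrincipalPartHom v hconst hres n).ker =
      ((ι).range ⊔ ⨅ q, (v q).higherUnitGroup (n q)).subgroupOf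
        (⨅ q, (v q).higherUnitGroup 0) := by
  ext f
  rw [MonoidHom.mem_ker, eq_comm, Subgroup.mem_subgroupOf, Subgroup.mem_range_sup_iff]
  refine (residuePrincipalPartHom_eq_mk_iff v hconst hres n f 1 1).trans
    (exists_congr fun c => ?_)
  simp only [Pi.one_apply, one_mul, Subgroup.mem_iInf]
  refine forall_congr' fun q => ?_
  refine (residue_eq_and_inv_mul_principalPart_mem_iff (v q) (hconst q) (hres q) (hn q)
    (Subgroup.inclusion (iInf_le _ q) f) c 1).trans ?_
  rw [OneMemClass.coe_one, mul_one]
  rfl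

theorem residuePrincipalPartHom_surjective [Fintype S] (hsurj : ∀ q, Surjective (v q))
    (hinj : Injective v) (hn : ∀ q, 0 < n q) :
    Surjective (residuePrincipalPartHom v hconst hres n) := by
  rintro ⟨y, z⟩
  obtain ⟨a, rfl⟩ := QuotientGroup.mk_surjective y
  choose u hu using fun q => QuotientGroup.mk_surjective (z q)
  obtain rfl : z = fun q => QuotientGroup.mk (u q) := funext fun q => (hu q).symm
  rcases isEmpty_or_nonempty S with hS | ⟨⟨q₀⟩⟩
  · exact ⟨1, Subsingleton.elim _ _⟩
  set t : S → Kˣ := fun q => ι (a q) * u q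
  have hvt (q : S) : v q (t q) = 0 := by
    simp [t, hconst q _ (a q).ne_zero,
      mem_higherUnitGroup_zero.mp ((v q).higherUnitGroup_antitone zero_le_one (u q).2)]
  obtain ⟨f, hf⟩ := exists_forall_le_val_sub hsurj hinj (fun q => (t q : K)) (∑ q, n q)
  have hfn (q : S) : ((n q : ℤ) : WithTop ℤ) ≤ v q (f - t q) := by
    refine le_trans ?_ (hf q)
    exact_mod_cast Finset.single_le_sum (fun q _ => Nat.zero_le (n q)) (Finset.mem_univ q)
  have hvf (q : S) : v q f = 0 := by
    refine ((v q).map_eq_of_lt_sub ?_).trans (hvt q)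
    exact (hvt q).symm ▸ lt_of_lt_of_le (by exact_mod_cast hn q) (hfn q)
  lift f to Kˣ using isUnit_iff_ne_zero.mpr <|
    (v q₀).ne_top_iff.mp (by rw [hvf q₀]; exact WithTop.zero_ne_top)
  refine ⟨⟨f, Subgroup.mem_iInf.mpr fun q => mem_higherUnitGroup_zero.mpr (hvf q)⟩,
    ((residuePrincipalPartHom_eq_mk_iff v hconst hres n _ a u).mpr ⟨1, fun q => ?_⟩).symm⟩
  rw [mul_one]
  exact (residue_eq_and_inv_mul_principalPart_mem_iff (v q) (hconst q) (hres q) (hn q)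
    _ _ _).mpr ((mul_inv_mem_higherUnitGroup_iff (hn q) (hvt q)).mpr (hfn q))

include hconst hres in
theorem nonempty_quotient_mulEquiv_localQuotient [Fintype S] (hsurj : ∀ q, Surjective (v q))
    (hinj : Injective v) (hn : ∀ q, 0 < n q) :
    Nonempty (↥(⨅ q, (v q).higherUnitGroup 0) ⧸
        ((ι).range ⊔ ⨅ q, (v q).higherUnitGroup (n q)).subgroupOf
          (⨅ q, (v q).higherUnitGroup 0) ≃*
      LocalQuotient k v n) :=
  -- naming `H` lets its `Group` instance be synthesized before unification with the codomain
  ⟨(QuotientGroup.quotientMulEquivOfEq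
      (ker_residuePrincipalPartHom v hconst hres n hn).symm).trans
    (QuotientGroup.quotientKerEquivOfSurjective (H := LocalQuotient k v n) _
      (residuePrincipalPartHom_surjective v hconst hres n hsurj hinj hn))⟩

theorem closure_eq_range_sup_iInf_higherUnitGroup (hn : ∀ q, 0 < n q) :
    Subgroup.closure {f : Kˣ | (∃ c : k, (f : K) = algebraMap k K c) ∨
        ∀ q, ((n q : ℤ) : WithTop ℤ) ≤ v q (1 - (f : K))} =
      (ι).range ⊔ ⨅ q, (v q).higherUnitGroup (n q) := by
  rw [← Subgroup.closure_eq (MonoidHom.range _), ← Subgroup.closure_eq (iInf _),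
    ← Subgroup.closure_union]
  congr 1
  ext f
  simp only [Set.mem_ofPred_eq, Set.mem_union, SetLike.mem_coe, MonoidHom.mem_range,
    Subgroup.mem_iInf, mem_higherUnitGroup_of_pos (hn _)]
  refine or_congr ⟨fun ⟨c, hc⟩ => ?_, fun ⟨c, hc⟩ => ⟨c, hc ▸ rfl⟩⟩ Iff.rfl
  have hc0 : c ≠ 0 := by rintro rfl; simp at hc
  exact ⟨Units.mk0 c hc0, Units.ext hc.symm⟩

end AffinePart

theorem generalizedJacobian_affine_part_general (k K : Type) [Field k] [Field K] [Algebra k K]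
    (S : Type) [Fintype S]
    (v : S → AddValuation K (WithTop ℤ))
    (hsurj : ∀ q, Function.Surjective (v q))
    (hdist : ∀ q q' : S, v q = v q' → q = q')
    (hconst : ∀ (q : S) (c : k), c ≠ 0 → v q (algebraMap k K c) = 0)
    (hres : ∀ (q : S) (x : K), (0 : WithTop ℤ) ≤ v q x →
      ∃ c : k, (0 : WithTop ℤ) < v q (x - algebraMap k K c))
    (n : S → ℕ) (hn : ∀ q, 1 ≤ n q)
    (G : Subgroup Kˣ) (hG : ∀ f : Kˣ, f ∈ G ↔ ∀ q, v q (f : K) = 0)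
    (U Un : S → Subgroup Kˣ)
    (hU : ∀ (q : S) (f : Kˣ), f ∈ U q ↔ ((1 : ℤ) : WithTop ℤ) ≤ v q (1 - (f : K)))
    (hUn : ∀ (q : S) (f : Kˣ), f ∈ Un q ↔ ((n q : ℤ) : WithTop ℤ) ≤ v q (1 - (f : K))) :
    Nonempty ((G ⧸ (Subgroup.closure {f : Kˣ |
        (∃ c : k, (f : K) = algebraMap k K c) ∨
        ∀ q, ((n q : ℤ) : WithTop ℤ) ≤ v q (1 - (f : K))}).subgroupOf G) ≃*
      (((S → kˣ) ⧸ (MonoidHom.mk' (fun c : kˣ => fun _ : S => c)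
          (fun _ _ => rfl)).range) ×
        (∀ q : S, U q ⧸ (Un q).subgroupOf (U q)))) := by
  obtain rfl : G = ⨅ q, (v q).higherUnitGroup 0 := by
    ext f; simp only [hG, Subgroup.mem_iInf, AddValuation.mem_higherUnitGroup_zero]
  obtain rfl : U = fun q => (v q).higherUnitGroup 1 := funext fun q =>
    Subgroup.ext fun f => (hU q f).trans (AddValuation.mem_higherUnitGroup_of_pos one_pos).symm
  obtain rfl : Un = fun q => (v q).higherUnitGroup (n q) := funext fun q =>
    Subgroup.ext fun f => (hUn q f).trans (AddValuation.mem_higherUnitGroup_of_pos (hn q)).symm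
  rw [closure_eq_range_sup_iInf_higherUnitGroup v n hn]
  exact nonempty_quotient_mulEquiv_localQuotient v hconst hres n hsurj hdist hn

/-- The affine part of the generalized Jacobian with modulus `D = ∑_{q∈S} n_q·q` of a smooth
proper curve `C` over an algebraically closed field `k`.

We encode the situation by the function field `K = K_C` (a field extension of `k`) together
with, for each point `q` of the finite set `S`, the discrete valuation `v q` of `K/k`
attached to `q` (normalized, i.e. surjective; pairwise distinct; trivial on `k`; with residue
field `k`).  On a proper curve, two rational functions have the same divisor iff they differ
by a constant in `k^×`, so the group of divisors `div(f)` of degree `0` with `f ∈ O_{C,q}^×`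
for all `q ∈ S`, modulo divisors `div(f)` with `v_q(1-f) ≥ n_q` for all `q ∈ S`, is the
quotient `G/H` where `G = {f ∈ K^× : v_q(f) = 0 ∀q∈S}` and `H` is generated by the constants
`k^×` together with `{f : v_q(1-f) ≥ n_q ∀q∈S}`.  The statement: this quotient is isomorphic
to `((∏_{q∈S} k(q)^×)/k^×) × ∏_{q∈S} (1+m_q)/(1+m_q^{n_q})`, where (residue fields being `k`)
`k(q)^× = k^×`, the subgroup `k^×` is embedded diagonally, `1+m_q^i` is encoded as
`{f : v_q(1-f) ≥ i}`. -/
theorem generalizedJacobian_affine_part (k K : Type) [Field k] [Field K] [Algebra k K]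
    [IsAlgClosed k] (S : Type) [Fintype S]
    (v : S → AddValuation K (WithTop ℤ))
    (hsurj : ∀ q, Function.Surjective (v q))
    (hdist : ∀ q q' : S, v q = v q' → q = q')
    (hconst : ∀ (q : S) (c : k), c ≠ 0 → v q (algebraMap k K c) = 0)
    (hres : ∀ (q : S) (x : K), (0 : WithTop ℤ) ≤ v q x →
      ∃ c : k, (0 : WithTop ℤ) < v q (x - algebraMap k K c))
    (n : S → ℕ) (hn : ∀ q, 1 ≤ n q)
    (G : Subgroup Kˣ) (hG : ∀ f : Kˣ, f ∈ G ↔ ∀ q, v q (f : K) = 0)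
    (U Un : S → Subgroup Kˣ)
    (hU : ∀ (q : S) (f : Kˣ), f ∈ U q ↔ ((1 : ℤ) : WithTop ℤ) ≤ v q (1 - (f : K)))
    (hUn : ∀ (q : S) (f : Kˣ), f ∈ Un q ↔ ((n q : ℤ) : WithTop ℤ) ≤ v q (1 - (f : K))) :
    Nonempty ((G ⧸ (Subgroup.closure {f : Kˣ |
        (∃ c : k, (f : K) = algebraMap k K c) ∨
        ∀ q, ((n q : ℤ) : WithTop ℤ) ≤ v q (1 - (f : K))}).subgroupOf G) ≃*
      (((S → kˣ) ⧸ (MonoidHom.mk' (fun c : kˣ => fun _ : S => c)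
          (fun _ _ => rfl)).range) ×
        (∀ q : S, U q ⧸ (Un q).subgroupOf (U q)))) :=
  generalizedJacobian_affine_part_general k K S v hsurj hdist hconst hres n hn G hG U Un hU hUn
end
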